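/- arXiv:2101.07565 — 5 statements merged into one kernel-verified Lean document; each statement's English description precedes it below -/
import Mathlib

section
/- Let G₁, G₂ ∈ SL(2,ℂ) satisfy Tr G₁ = 2, Tr G₂ = 2 and Tr(G₂·G₁) = 2, and suppose G₁ ≠ I. Then every nonzero spinor z with G₁·z = z also satisfies G₂·z = z; that is, G₁ and G₂ have a common fixed spinor direction. -/
/-!
With `Nᵢ = Gᵢ - 1`, both `Nᵢ` are traceless, Cayley–Hamilton gives `N₂ ^ 2 = 0`, and the trace
conditions give `tr (N₂ N₁) = 0`. For traceless `2 × 2` matrices `A B + B A = tr (A B) • 1`, so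
`N₁` and `N₂` anticommute, and `N₂` maps `ker N₁` to itself. Since `N₁ ≠ 0`, that kernel is the
line through the fixed spinor `z`, so `z` is an eigenvector of the nilpotent `N₂`, with
eigenvalue `0`.
-/

open Matrix

namespace Matrix

section CommRing

variable {R : Type*} [CommRing R]

theorem fin_two_sq_sub_trace_smul_add_det_smul [Nontrivial R] (A : Matrix (Fin 2) (Fin 2) R) :
    A ^ 2 - A.trace • A + A.det • (1 : Matrix (Fin 2) (Fin 2) R) = 0 := by
  simpa [charpoly_fin_two, Algebra.smul_def] using A.aeval_self_charpoly

theorem fin_two_sq_sub_one_eq_zero [Nontrivial R] {A : Matrix (Fin 2) (Fin 2) R}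
    (hdet : A.det = 1) (htr : A.trace = 2) : (A - 1) ^ 2 = 0 := by
  have hCH := A.fin_two_sq_sub_trace_smul_add_det_smul
  rw [hdet, htr, one_smul, two_smul] at hCH
  rw [← hCH]
  noncomm_ring

theorem fin_two_mul_add_mul (A B : Matrix (Fin 2) (Fin 2) R) :
    A * B + B * A =
      A.trace • B + B.trace • A + ((A * B).trace - A.trace * B.trace) • (1 : Matrix _ _ R) := by
  ext i j
  fin_cases i <;> fin_cases j <;>
    simp [mul_apply, Fin.sum_univ_two, trace_fin_two] <;> ring

end CommRing

section Field

variable {K : Type*} [Field K]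

theorem fin_two_ker_toLin'_eq_span_singleton {N : Matrix (Fin 2) (Fin 2) K} (hN : N ≠ 0)
    {z : Fin 2 → K} (hz : z ≠ 0) (hNz : N *ᵥ z = 0) :
    LinearMap.ker (toLin' N) = K ∙ z := by
  have hker : LinearMap.ker (toLin' N) ≠ ⊤ := by
    rwa [Ne, LinearMap.ker_eq_top, LinearEquiv.map_eq_zero_iff]
  have hrank := Submodule.finrank_lt hker
  rw [Module.finrank_fin_fun] at hrank
  refine (Submodule.eq_of_le_of_finrank_le ?_ ?_).symm
  · rwa [Submodule.span_singleton_le_iff_mem, LinearMap.mem_ker, toLin'_apply]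
  · rw [finrank_span_singleton hz]
    omega

theorem eq_zero_of_sq_eq_zero_of_mulVec_eq_smul {n : Type*} [Fintype n] [DecidableEq n]
    {N : Matrix n n K} (hN : N ^ 2 = 0) {z : n → K} (hz : z ≠ 0) {c : K}
    (hNz : N *ᵥ z = c • z) : c = 0 := by
  have hsq : (c * c) • z = 0 := by
    rw [← smul_smul, ← hNz, ← mulVec_smul, ← hNz, mulVec_mulVec, ← sq, hN, zero_mulVec]
  exact mul_self_eq_zero.mp ((smul_eq_zero.mp hsq).resolve_right hz)

end Field

end Matrix

theorem common_fixed_spinor_general (G₁ G₂ : Matrix (Fin 2) (Fin 2) ℂ)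
    (h₂det : G₂.det = 1)
    (h₁tr : G₁.trace = 2) (h₂tr : G₂.trace = 2)
    (h₂₁tr : (G₂ * G₁).trace = 2) (hG₁ : G₁ ≠ 1) :
    ∀ z : Fin 2 → ℂ, z ≠ 0 → G₁.mulVec z = z → G₂.mulVec z = z := by
  intro z hz hfix
  have hN₁z : (G₁ - 1) *ᵥ z = 0 := by rw [sub_mulVec, one_mulVec, hfix, sub_self]
  have hN₁tr : (G₁ - 1).trace = 0 := by rw [trace_sub, h₁tr, trace_one]; norm_num
  have hN₂tr : (G₂ - 1).trace = 0 := by rw [trace_sub, h₂tr, trace_one]; norm_num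
  have hN₂N₁tr : ((G₂ - 1) * (G₁ - 1)).trace = 0 := by
    simp only [mul_sub, sub_mul, mul_one, one_mul, trace_sub, h₁tr, h₂tr, h₂₁tr, trace_one]
    norm_num
  have hanti : (G₁ - 1) * (G₂ - 1) + (G₂ - 1) * (G₁ - 1) = 0 := by
    rw [fin_two_mul_add_mul, hN₁tr, hN₂tr, trace_mul_comm, hN₂N₁tr]
    simp
  have hN₂z_mem : (G₂ - 1) *ᵥ z ∈ LinearMap.ker (toLin' (G₁ - 1)) := by
    rw [LinearMap.mem_ker, toLin'_apply, mulVec_mulVec, eq_neg_of_add_eq_zero_left hanti,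
      neg_mulVec, ← mulVec_mulVec, hN₁z, mulVec_zero, neg_zero]
  rw [fin_two_ker_toLin'_eq_span_singleton (sub_ne_zero.mpr hG₁) hz hN₁z] at hN₂z_mem
  obtain ⟨c, hc⟩ := Submodule.mem_span_singleton.mp hN₂z_mem
  have hc0 :=
    eq_zero_of_sq_eq_zero_of_mulVec_eq_smul (fin_two_sq_sub_one_eq_zero h₂det h₂tr) hz hc.symm
  rw [hc0, zero_smul, sub_mulVec, one_mulVec, eq_comm, sub_eq_zero] at hc
  exact hc

/-- if `G₁, G₂ ∈ SL(2,ℂ)` have trace 2, `Tr(G₂G₁) = 2` and `G₁ ≠ I`,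
then every nonzero spinor fixed by `G₁` is also fixed by `G₂`. -/
theorem common_fixed_spinor (G₁ G₂ : Matrix (Fin 2) (Fin 2) ℂ)
    (h₁det : G₁.det = 1) (h₂det : G₂.det = 1)
    (h₁tr : G₁.trace = 2) (h₂tr : G₂.trace = 2)
    (h₂₁tr : (G₂ * G₁).trace = 2) (hG₁ : G₁ ≠ 1) :
    ∀ z : Fin 2 → ℂ, z ≠ 0 → G₁.mulVec z = z → G₂.mulVec z = z :=
  common_fixed_spinor_general G₁ G₂ h₂det h₁tr h₂tr h₂₁tr hG₁
end

section
/- Let N ≥ 1, let z_i (i = 1,…,N) be nonzero spinors, and let μ_{ij} ∈ ℂ for each ordered pair (i,j) with μ_{ji} = −μ_{ij}. Define G_{ij} = Λ_{z_j} · t_{μ_{ij}} · Λ_{z_i}⁻¹ where t_μ = [[1, μ],[0, 1]]. Then: each G_{ij} ∈ SL(2,ℂ); G_{ij}·z_i = z_j; G_{ji} = G_{ij}⁻¹; and for every n ≥ 1 and every cyclic sequence of indices i₁, i₂, …, i_n, the ordered holonomy product G_{i_n i₁} ⋯ G_{i₂ i₃} · G_{i₁ i₂} equals Λ_{z_{i₁}}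 · t_μ · Λ_{z_{i₁}}⁻¹ for some μ ∈ ℂ, and in particular has trace equal to 2. -/
open Matrix ComplexConjugate

/-- The Hermitian pairing `⟨z|w⟩ = conj(z⁰)w⁰ + conj(z¹)w¹` of two spinors. -/
def herm (z w : Fin 2 → ℂ) : ℂ := conj (z 0) * w 0 + conj (z 1) * w 1

/-- The unipotent upper triangular matrix `t_μ = [[1, μ],[0, 1]]`. -/
def tMu (μ : ℂ) : Matrix (Fin 2) (Fin 2) ℂ := !![1, μ; 0, 1]

/-- The section `Λ_z`. -/
noncomputable def Lam (z : Fin 2 → ℂ) : Matrix (Fin 2) (Fin 2) ℂ :=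
  !![z 0, -conj (z 1) / herm z z; z 1, conj (z 0) / herm z z]

/-- The ordered holonomy product `G_{i_n i₁} ⋯ G_{i₂ i₃} · G_{i₁ i₂}` around the
cyclic sequence of punctures `i₁, …, i_n` given by `seq`. -/
noncomputable def holonomy {N n : ℕ} (G : Fin N → Fin N → Matrix (Fin 2) (Fin 2) ℂ)
    (seq : Fin n → Fin N) : Matrix (Fin 2) (Fin 2) ℂ :=
  ((List.ofFn fun k : Fin n => G (seq k) (seq (finRotate n k))).reverse).prod


lemma herm_ne (z : Fin 2 → ℂ) (hz : z ≠ 0) : herm z z ≠ 0 := by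
  intro h
  apply hz
  have h' : Complex.normSq (z 0) + Complex.normSq (z 1) = 0 := by
    have := congrArg Complex.re h
    simpa [herm, Complex.normSq_apply, Complex.mul_re, Complex.conj_re, Complex.conj_im,
      mul_comm] using this
  have h0 : z 0 = 0 := by
    have := Complex.normSq_nonneg (z 0); have := Complex.normSq_nonneg (z 1)
    have : Complex.normSq (z 0) = 0 := by linarith
    exact Complex.normSq_eq_zero.mp this
  have h1 : z 1 = 0 := by
    have := Complex.normSq_nonneg (z 0); have := Complex.normSq_nonneg (z 1)
    have : Complex.normSq (z 1) = 0 := by linarith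
    exact Complex.normSq_eq_zero.mp this
  funext i; fin_cases i <;> simp [h0, h1]

lemma det_Lam (z : Fin 2 → ℂ) (hz : z ≠ 0) : (Lam z).det = 1 := by
  have h := herm_ne z hz
  simp only [Lam, Matrix.det_fin_two_of]
  field_simp
  simp [herm]; ring

lemma tMu_mul (a b : ℂ) : tMu a * tMu b = tMu (a + b) := by
  simp [tMu, Matrix.mul_fin_two, add_comm]

lemma tMu_zero : tMu 0 = 1 := by
  simp [tMu]; exact (Matrix.one_fin_two).symm

lemma tMu_det (a : ℂ) : (tMu a).det = 1 := by simp [tMu]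

lemma tMu_trace (a : ℂ) : (tMu a).trace = 2 := by
  simp [tMu, Matrix.trace_fin_two_of]; norm_num

lemma tMu_inv (a : ℂ) : (tMu a)⁻¹ = tMu (-a) := by
  apply Matrix.inv_eq_right_inv
  rw [tMu_mul]; simp [tMu_zero]

lemma conj_helper (X Y Z : Matrix (Fin 2) (Fin 2) ℂ) (hY : Y⁻¹ * Y = 1) (a b : ℂ) :
    X * tMu a * Y⁻¹ * (Y * tMu b * Z) = X * tMu (a + b) * Z := by
  simp only [mul_assoc]
  rw [← mul_assoc Y⁻¹ Y, hY, one_mul, ← mul_assoc (tMu a), tMu_mul]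

lemma Lam_mul_inv (z : Fin 2 → ℂ) (hz : z ≠ 0) : Lam z * (Lam z)⁻¹ = 1 :=
  Matrix.mul_nonsing_inv _ (by rw [det_Lam z hz]; exact isUnit_one)

lemma inv_mul_Lam (z : Fin 2 → ℂ) (hz : z ≠ 0) : (Lam z)⁻¹ * Lam z = 1 :=
  Matrix.nonsing_inv_mul _ (by rw [det_Lam z hz]; exact isUnit_one)

lemma Lam_mulVec_e0 (z : Fin 2 → ℂ) : (Lam z).mulVec ![1, 0] = z := by
  funext i; fin_cases i <;> simp [Lam, Matrix.mulVec, dotProduct, Fin.sum_univ_two]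

lemma tMu_mulVec_e0 (a : ℂ) : (tMu a).mulVec ![1, 0] = ![1, 0] := by
  funext i; fin_cases i <;> simp [tMu, Matrix.mulVec, dotProduct, Fin.sum_univ_two]

/-- the discrete Lorentz connection `G_{ij} = Λ_{z_j} t_{μ_{ij}} Λ_{z_i}⁻¹`
built from nonzero spinors `z_i` and antisymmetric translation parameters `μ_{ij}`
lands in `SL(2,ℂ)`, transports the spinors, is compatible with orientation reversal,
and all its holonomies around cycles are conjugates (by `Λ_{z_{i₁}}`) of translations;
in particular they have trace 2. -/
theorem discrete_connection_from_spinors (N : ℕ) (hN : 1 ≤ N)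
    (z : Fin N → Fin 2 → ℂ) (hz : ∀ i, z i ≠ 0)
    (μ : Fin N → Fin N → ℂ) (hμ : ∀ i j, μ j i = -μ i j)
    (G : Fin N → Fin N → Matrix (Fin 2) (Fin 2) ℂ)
    (hG : ∀ i j, G i j = Lam (z j) * tMu (μ i j) * (Lam (z i))⁻¹) :
    (∀ i j, (G i j).det = 1) ∧
    (∀ i j, (G i j).mulVec (z i) = z j) ∧
    (∀ i j, G j i = (G i j)⁻¹) ∧
    (∀ n : ℕ, ∀ hn : 1 ≤ n, ∀ seq : Fin n → Fin N,
      (∃ ν : ℂ, holonomy G seq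
          = Lam (z (seq ⟨0, hn⟩)) * tMu ν * (Lam (z (seq ⟨0, hn⟩)))⁻¹) ∧
      (holonomy G seq).trace = 2) := by
  have hdet : ∀ i, IsUnit (Lam (z i)).det := by
    intro i; rw [det_Lam _ (hz i)]; exact isUnit_one
  refine ⟨?_, ?_, ?_, ?_⟩
  · intro i j
    rw [hG]
    rw [Matrix.det_mul, Matrix.det_mul, det_Lam _ (hz j), tMu_det,
      Matrix.det_nonsing_inv, det_Lam _ (hz i)]
    simp
  · intro i j
    rw [hG]
    have h1 : (Lam (z i))⁻¹.mulVec ((Lam (z i)).mulVec ![1, 0]) = ![1, 0] := by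
      rw [Matrix.mulVec_mulVec, inv_mul_Lam _ (hz i), Matrix.one_mulVec]
    rw [Lam_mulVec_e0] at h1
    rw [← Matrix.mulVec_mulVec, ← Matrix.mulVec_mulVec, h1, tMu_mulVec_e0, Lam_mulVec_e0]
  · intro i j
    rw [hG, hG, hμ, Matrix.mul_inv_rev, Matrix.mul_inv_rev,
      Matrix.nonsing_inv_nonsing_inv _ (hdet i), tMu_inv, mul_assoc]
  · have path : ∀ m : ℕ, ∀ a : Fin (m+1) → Fin N, ∃ ν : ℂ,
        ((List.ofFn fun k : Fin m => G (a k.castSucc) (a k.succ)).reverse).prod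
          = Lam (z (a (Fin.last m))) * tMu ν * (Lam (z (a 0)))⁻¹ := by
      intro m
      induction m with
      | zero =>
        intro a
        refine ⟨0, ?_⟩
        have : a (Fin.last 0) = a 0 := rfl
        rw [this, tMu_zero, mul_one, Lam_mul_inv _ (hz _)]
        simp
      | succ m ih =>
        intro a
        obtain ⟨ν, hν⟩ := ih (a ∘ Fin.castSucc)
        refine ⟨μ (a (Fin.last m).castSucc) (a (Fin.last (m+1))) + ν, ?_⟩
        rw [List.ofFn_succ', List.concat_eq_append, List.reverse_append, List.reverse_singleton,
          List.singleton_append, List.prod_cons]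
        have hrest : ((List.ofFn fun i : Fin m =>
            G (a i.castSucc.castSucc) (a i.castSucc.succ)).reverse).prod
            = Lam (z (a (Fin.last m).castSucc)) * tMu ν * (Lam (z (a 0)))⁻¹ := by
          have : (fun i : Fin m => G (a i.castSucc.castSucc) (a i.castSucc.succ))
              = fun i : Fin m => G ((a ∘ Fin.castSucc) i.castSucc) ((a ∘ Fin.castSucc) i.succ) := by
            funext i
            simp only [Function.comp_apply, Fin.succ_castSucc]
          rw [this, hν]
          rfl
        rw [hrest, hG]
        have hls : (Fin.last m).succ = Fin.last (m+1) := rfl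
        rw [hls]
        exact conj_helper _ _ _ (inv_mul_Lam _ (hz _)) _ _
    intro n hn seq
    obtain ⟨m, rfl⟩ : ∃ m, n = m + 1 := ⟨n - 1, (Nat.succ_pred_eq_of_pos hn).symm⟩
    set a : Fin (m+2) → Fin N :=
      fun k => seq ⟨(k : ℕ) % (m+1), Nat.mod_lt _ m.succ_pos⟩ with ha
    have hhol : holonomy G seq
        = ((List.ofFn fun k : Fin (m+1) => G (a k.castSucc) (a k.succ)).reverse).prod := by
      unfold holonomy
      congr 1
      apply congrArg
      apply congrArg
      funext k
      have h1 : a k.castSucc = seq k := by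
        simp only [ha, Fin.coe_castSucc]
        congr 1
        exact Fin.ext (Nat.mod_eq_of_lt k.isLt)
      have h2 : a k.succ = seq (finRotate (m+1) k) := by
        simp only [ha, Fin.val_succ]
        congr 1
        apply Fin.ext
        rw [finRotate_succ_apply]
        simp only [Fin.val_add]
        rw [Nat.add_mod, Nat.mod_eq_of_lt k.isLt]
        rfl
      rw [h1, h2]
    obtain ⟨ν, hν⟩ := path (m+1) a
    have h0 : a 0 = seq ⟨0, hn⟩ := by
      simp only [ha]; congr 1
    have hlast : a (Fin.last (m+1)) = seq ⟨0, hn⟩ := by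
      simp only [ha, Fin.val_last]
      congr 1
      exact Fin.ext (Nat.mod_self _)
    rw [hhol, hν, h0, hlast]
    refine ⟨⟨ν, rfl⟩, ?_⟩
    rw [mul_assoc, Matrix.trace_mul_comm, mul_assoc, inv_mul_Lam _ (hz _), mul_one, tMu_trace]
end

section
/- Let N ≥ 1 and let G_{ij} ∈ SL(2,ℂ) for each ordered pair of indices i, j ∈ {1,…,N}, satisfying G_{ji} · G_{ij} = I for all i, j, and such that for every n ≥ 1 and every sequence of indices i₁, i₂, …, i_n, the trace of the ordered holonomy product G_{i_n i₁} ⋯ G_{i₂ i₃} · G_{i₁ i₂} equals 2. Then there exist nonzero spinors z_i ∈ ℂ² such that G_{ij}·z_i = z_j for all i, j. -/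
open Matrix

private lemma holonomy_three {N : ℕ} (G : Fin N → Fin N → Matrix (Fin 2) (Fin 2) ℂ)
    (a b c : Fin N) : holonomy G ![a,b,c] = G c a * G b c * G a b := by
  simp [holonomy, List.ofFn_succ, finRotate_succ_apply, mul_assoc]

private lemma holonomy_six {N : ℕ} (G : Fin N → Fin N → Matrix (Fin 2) (Fin 2) ℂ)
    (a b c d e f : Fin N) :
    holonomy G ![a,b,c,d,e,f] = G f a * G e f * G d e * G c d * G b c * G a b := by
  simp [holonomy, List.ofFn_succ, finRotate_succ_apply, mul_assoc]

private lemma key1 (p q r s t u : ℂ) (h1 : p^2 + q*r = 0) (h2 : s^2 + t*u = 0)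
    (h3 : 2*p*s + q*u + r*t = 0) (hq : q ≠ 0) :
    s*q - t*p = 0 ∧ u*q + s*p = 0 := by
  have hE1 : (s*q - t*p)^2 = 0 := by linear_combination q^2*h2 - t*q*h3 + t^2*h1
  have hE1' : s*q - t*p = 0 := pow_eq_zero_iff (n := 2) (by norm_num) |>.mp hE1
  refine ⟨hE1', ?_⟩
  have h : q*(u*q + s*p) = 0 := by linear_combination q*h3 - t*h1 - p*hE1'
  exact (mul_eq_zero.mp h).resolve_left hq

private lemma key2 (p q r s t u : ℂ) (h1 : p^2 + q*r = 0) (h2 : s^2 + t*u = 0)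
    (h3 : 2*p*s + q*u + r*t = 0) (hr : r ≠ 0) :
    s*p + t*r = 0 ∧ u*p - s*r = 0 := by
  have hF2 : (u*p - s*r)^2 = 0 := by linear_combination r^2*h2 - u*r*h3 + u^2*h1
  have hF2' : u*p - s*r = 0 := pow_eq_zero_iff (n := 2) (by norm_num) |>.mp hF2
  refine ⟨?_, hF2'⟩
  have h : r*(s*p + t*r) = 0 := by linear_combination r*h3 - u*h1 + p*hF2'
  exact (mul_eq_zero.mp h).resolve_left hr

/-- A family of 2×2 complex matrices all of whose members and pairwise products
have trace 2 has a common nonzero fixed vector. -/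
private lemma exists_common_fixed {ι : Type*} (F : ι → Matrix (Fin 2) (Fin 2) ℂ)
    (h3 : ∀ a, (F a).trace = 2) (h6 : ∀ a b, (F a * F b).trace = 2) :
    ∃ v : Fin 2 → ℂ, v ≠ 0 ∧ ∀ a, (F a).mulVec v = v := by
  by_cases hall : ∀ a, F a = 1
  · refine ⟨![1, 0], ?_, fun a => by rw [hall a, one_mulVec]⟩
    intro h
    have := congrFun h 0
    simp at this
  push_neg at hall
  obtain ⟨a0, ha0⟩ := hall
  set A := F a0 with hA
  set p := A 0 0 - 1 with hp
  set q := A 0 1 with hq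
  set r := A 1 0 with hr
  have hA11 : A 1 1 = 1 - p := by
    have := h3 a0
    rw [Matrix.trace_fin_two] at this
    rw [hp]; linear_combination this
  -- data for an arbitrary member of the family
  have hdata : ∀ b, (F b) 1 1 = 1 - ((F b) 0 0 - 1) ∧
      ((F b) 0 0 - 1)^2 + (F b) 0 1 * (F b) 1 0 = 0 ∧
      2*p*((F b) 0 0 - 1) + q * ((F b) 1 0) + r * ((F b) 0 1) = 0 := by
    intro b
    have t1 := h3 b
    rw [Matrix.trace_fin_two] at t1
    have hb11 : (F b) 1 1 = 1 - ((F b) 0 0 - 1) := by linear_combination t1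
    have t2 := h6 b b
    rw [Matrix.trace_fin_two] at t2
    simp only [Matrix.mul_apply, Fin.sum_univ_two] at t2
    have t3 := h6 a0 b
    rw [Matrix.trace_fin_two] at t3
    simp only [Matrix.mul_apply, Fin.sum_univ_two] at t3
    rw [hb11] at t2 t3
    rw [← hA, hA11] at t3
    refine ⟨hb11, by linear_combination t2/2, ?_⟩
    rw [hp, hq, hr]
    linear_combination t3
  have h1 : p^2 + q*r = 0 := (hdata a0).2.1
  -- A ≠ 1 forces (p, q, r) ≠ 0
  have hpqr : ¬ (p = 0 ∧ q = 0 ∧ r = 0) := by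
    rintro ⟨hp0, hq0, hr0⟩
    apply ha0
    have h00 : A 0 0 = 1 := by rw [hp] at hp0; linear_combination hp0
    have h11 : A 1 1 = 1 := by rw [hA11, hp0]; ring
    ext i j
    fin_cases i <;> fin_cases j <;>
      simp [Matrix.one_apply, h00, h11, ← hq, ← hr, hq0, hr0]
  rcases eq_or_ne q 0 with hq0 | hq0
  · rcases eq_or_ne r 0 with hr0 | hr0
    · exfalso
      apply hpqr
      refine ⟨?_, hq0, hr0⟩
      have : p^2 = 0 := by rw [hq0] at h1; linear_combination h1
      exact pow_eq_zero_iff (n := 2) (by norm_num) |>.mp this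
    · refine ⟨![p, r], ?_, ?_⟩
      · intro h
        exact hr0 (congrFun h 1)
      · intro b
        obtain ⟨hb11, h2, h3'⟩ := hdata b
        obtain ⟨hF1, hF2⟩ := key2 p q r ((F b) 0 0 - 1) ((F b) 0 1) ((F b) 1 0)
          h1 h2 (by linear_combination h3') hr0
        funext i
        fin_cases i <;>
          simp only [Matrix.mulVec, dotProduct, Fin.sum_univ_two,
            Matrix.cons_val_zero, Matrix.cons_val_one, Matrix.head_cons, Fin.mk_zero,
            Fin.mk_one, Fin.isValue]
        · linear_combination hF1
        · rw [hb11]; linear_combination hF2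
  · refine ⟨![q, -p], ?_, ?_⟩
    · intro h
      exact hq0 (congrFun h 0)
    · intro b
      obtain ⟨hb11, h2, h3'⟩ := hdata b
      obtain ⟨hE1, hE2⟩ := key1 p q r ((F b) 0 0 - 1) ((F b) 0 1) ((F b) 1 0)
        h1 h2 (by linear_combination h3') hq0
      funext i
      fin_cases i <;>
        simp only [Matrix.mulVec, dotProduct, Fin.sum_univ_two,
          Matrix.cons_val_zero, Matrix.cons_val_one, Matrix.head_cons, Fin.mk_zero,
          Fin.mk_one, Fin.isValue]
      · linear_combination hE1
      · rw [hb11]; linear_combination hE2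

/-- a discrete Lorentz connection `G_{ij} ∈ SL(2,ℂ)` with
`G_{ji}G_{ij} = I` whose holonomy around every cycle has trace 2 admits nonzero
spinors `z_i` transported by the connection: `G_{ij}·z_i = z_j`. -/
theorem spinors_from_constrained_connection (N : ℕ) (hN : 1 ≤ N)
    (G : Fin N → Fin N → Matrix (Fin 2) (Fin 2) ℂ)
    (hdet : ∀ i j, (G i j).det = 1)
    (hinv : ∀ i j, G j i * G i j = 1)
    (hhol : ∀ n : ℕ, 1 ≤ n → ∀ seq : Fin n → Fin N, (holonomy G seq).trace = 2) :
    ∃ z : Fin N → Fin 2 → ℂ, (∀ i, z i ≠ 0) ∧ ∀ i j, (G i j).mulVec (z i) = z j := by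
  set z0 : Fin N := ⟨0, hN⟩ with hz0
  have hM3 : ∀ a : Fin N × Fin N,
      (G a.2 z0 * G a.1 a.2 * G z0 a.1).trace = 2 := by
    rintro ⟨i, j⟩
    have := hhol 3 (by norm_num) ![z0, i, j]
    rwa [holonomy_three] at this
  have hM6 : ∀ a b : Fin N × Fin N,
      ((G a.2 z0 * G a.1 a.2 * G z0 a.1) * (G b.2 z0 * G b.1 b.2 * G z0 b.1)).trace = 2 := by
    rintro ⟨i, j⟩ ⟨k, l⟩
    have := hhol 6 (by norm_num) ![z0, k, l, z0, i, j]
    rw [holonomy_six] at this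
    simp only [mul_assoc] at this ⊢
    exact this
  obtain ⟨v, hv0, hv⟩ := exists_common_fixed
    (fun a : Fin N × Fin N => G a.2 z0 * G a.1 a.2 * G z0 a.1) hM3 hM6
  refine ⟨fun j => (G z0 j).mulVec v, ?_, ?_⟩
  · intro j h
    apply hv0
    have h' : (G z0 j).mulVec v = 0 := h
    have h2 : (G j z0).mulVec ((G z0 j).mulVec v) = v := by
      rw [mulVec_mulVec, hinv z0 j, one_mulVec]
    rw [← h2, h', mulVec_zero]
  · intro i j
    have h := hv (i, j)
    have h2 := congrArg (fun w => (G z0 j).mulVec w) h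
    simp only [mulVec_mulVec] at h2
    rw [show G z0 j * (G j z0 * G i j * G z0 i) = G i j * G z0 i by
      rw [show G z0 j * (G j z0 * G i j * G z0 i) = (G z0 j * G j z0) * G i j * G z0 i by
        simp only [mul_assoc], hinv j z0, one_mul]] at h2
    rw [mulVec_mulVec]
    exact h2
end

section
/- Let N ≥ 1, let z_i ∈ ℂ² (i = 1,…,N) be nonzero spinors and ζ_i ∈ ℂ complex coordinates with z_i⁰ − ζ_i·z_i¹ ≠ 0 for every i. Then for each ordered pair (i,j) there exists a unique G_{ij} ∈ SL(2,ℂ) such that G_{ij}·z_i = z_j and G_{ij}·(ζ_i, 1) = c·(ζ_j, 1) for some nonzero c ∈ ℂ. Moreover this family is a flat discrete connection: G_{jk} · G_{ij} = G_{ik} for all i, j, k, so the ordered holonomy product around every cyclic sequence of indices is the identity. -/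
open Matrix

lemma eq_of_mulVec_basis {A B : Matrix (Fin 2) (Fin 2) ℂ}
    (h0 : A.mulVec ![1,0] = B.mulVec ![1,0])
    (h1 : A.mulVec ![0,1] = B.mulVec ![0,1]) : A = B := by
  ext a b
  fin_cases b
  · have := congrFun h0 a
    simpa [Matrix.mulVec, dotProduct, Fin.sum_univ_two] using this
  · have := congrFun h1 a
    simpa [Matrix.mulVec, dotProduct, Fin.sum_univ_two] using this

lemma path_prod {N : ℕ} (G : Fin N → Fin N → Matrix (Fin 2) (Fin 2) ℂ)
    (hid : ∀ i, G i i = 1) (hflat : ∀ i j k, G j k * G i j = G i k) :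
    ∀ m (p : Fin (m+1) → Fin N),
      ((List.ofFn fun k : Fin m => G (p k.castSucc) (p k.succ)).reverse).prod
        = G (p 0) (p (Fin.last m)) := by
  intro m
  induction m with
  | zero => intro p; simp [hid]
  | succ m ih =>
    intro p
    rw [List.ofFn_succ']
    simp only [List.concat_eq_append, List.reverse_append, List.reverse_cons,
      List.reverse_nil, List.nil_append, List.singleton_append, List.prod_cons]
    have h := ih (fun k => p k.castSucc)
    simp only [← Fin.succ_castSucc] at h
    rw [h, hflat]
    rfl

/-- given nonzero spinors `z_i` and complex positions `ζ_i` with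
`z_i⁰ − ζ_i z_i¹ ≠ 0`, there is for each ordered pair `(i,j)` a unique
`G_{ij} ∈ SL(2,ℂ)` with `G_{ij}·z_i = z_j` and `G_{ij}·(ζ_i,1) ∝ (ζ_j,1)`,
and this family is a flat discrete connection: `G_{jk}G_{ij} = G_{ik}`, so all
holonomies around cyclic sequences are the identity. -/
theorem flat_connection_from_spinor_position_data (N : ℕ) (hN : 1 ≤ N)
    (z : Fin N → Fin 2 → ℂ) (ζ : Fin N → ℂ)
    (hz : ∀ i, z i ≠ 0) (hzζ : ∀ i, z i 0 - ζ i * z i 1 ≠ 0) :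
    ∃ G : Fin N → Fin N → Matrix (Fin 2) (Fin 2) ℂ,
      (∀ i j, (G i j).det = 1 ∧ (G i j).mulVec (z i) = z j ∧
        ∃ c : ℂ, c ≠ 0 ∧ (G i j).mulVec ![ζ i, 1] = c • ![ζ j, 1]) ∧
      (∀ i j, ∀ H : Matrix (Fin 2) (Fin 2) ℂ,
        H.det = 1 → H.mulVec (z i) = z j →
        (∃ c : ℂ, c ≠ 0 ∧ H.mulVec ![ζ i, 1] = c • ![ζ j, 1]) → H = G i j) ∧
      (∀ i j k, G j k * G i j = G i k) ∧
      (∀ n : ℕ, 1 ≤ n → ∀ seq : Fin n → Fin N, holonomy G seq = 1) := by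
  classical
  set M : Fin N → Matrix (Fin 2) (Fin 2) ℂ := fun i => !![z i 0, ζ i; z i 1, 1] with hM
  have hdet : ∀ i, (M i).det = z i 0 - ζ i * z i 1 := by
    intro i; simp [hM, Matrix.det_fin_two_of]
  have hdne : ∀ i, (M i).det ≠ 0 := fun i => by rw [hdet]; exact hzζ i
  have hMinv : ∀ i, M i * (M i)⁻¹ = 1 := fun i => Matrix.mul_nonsing_inv _ (isUnit_iff_ne_zero.mpr (hdne i))
  have hMinv' : ∀ i, (M i)⁻¹ * M i = 1 := fun i => Matrix.nonsing_inv_mul _ (isUnit_iff_ne_zero.mpr (hdne i))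
  -- D c := diag(1,c)
  set D : ℂ → Matrix (Fin 2) (Fin 2) ℂ := fun c => !![1,0;0,c] with hD
  set G : Fin N → Fin N → Matrix (Fin 2) (Fin 2) ℂ :=
    fun i j => M j * D ((M i).det / (M j).det) * (M i)⁻¹ with hG
  have hMe0 : ∀ i, (M i).mulVec ![1,0] = z i := by
    intro i; ext a; fin_cases a <;>
      simp [hM, Matrix.mulVec, dotProduct, Fin.sum_univ_two]
  have hMe1 : ∀ i, (M i).mulVec ![0,1] = ![ζ i, 1] := by
    intro i; ext a; fin_cases a <;>
      simp [hM, Matrix.mulVec, dotProduct, Fin.sum_univ_two]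
  have hDe0 : ∀ c, (D c).mulVec ![1,0] = ![1,0] := by
    intro c; ext a; fin_cases a <;>
      simp [hD, Matrix.mulVec, dotProduct, Fin.sum_univ_two]
  have hDe1 : ∀ c, (D c).mulVec ![0,1] = c • ![0,1] := by
    intro c; ext a; fin_cases a <;>
      simp [hD, Matrix.mulVec, dotProduct, Fin.sum_univ_two]
  have hDdet : ∀ c, (D c).det = c := by
    intro c; simp [hD, Matrix.det_fin_two_of]
  have hDmul : ∀ a b : ℂ, D a * D b = D (a*b) := by
    intro a b
    ext u v; fin_cases u <;> fin_cases v <;>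
      simp [hD, Matrix.mul_apply, Fin.sum_univ_two]
  -- main existence properties
  have hGdet : ∀ i j, (G i j).det = 1 := by
    intro i j
    rw [hG]
    simp only [Matrix.det_mul, hDdet, Matrix.det_nonsing_inv]
    field_simp
    rw [Ring.inverse_eq_inv', mul_assoc, mul_inv_cancel₀ (hdne i), mul_one, div_self (hdne j)]
  have hGM : ∀ i j, G i j * M i = M j * D ((M i).det / (M j).det) := by
    intro i j
    rw [hG, mul_assoc, hMinv' i, mul_one]
  have hGz : ∀ i j, (G i j).mulVec (z i) = z j := by
    intro i j
    have h1 : (G i j).mulVec (z i) = (G i j).mulVec ((M i).mulVec ![1,0]) := by rw [hMe0]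
    rw [h1, Matrix.mulVec_mulVec, hGM, ← Matrix.mulVec_mulVec, hDe0, hMe0]
  have hGζ : ∀ i j, (G i j).mulVec ![ζ i, 1] = ((M i).det / (M j).det) • ![ζ j, 1] := by
    intro i j
    have h1 : (G i j).mulVec ![ζ i, 1] = (G i j).mulVec ((M i).mulVec ![0,1]) := by rw [hMe1]
    rw [h1, Matrix.mulVec_mulVec, hGM, ← Matrix.mulVec_mulVec, hDe1,
      Matrix.mulVec_smul, hMe1]
  have hcne : ∀ i j, (M i).det / (M j).det ≠ 0 := fun i j => div_ne_zero (hdne i) (hdne j)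
  -- uniqueness
  have huniq : ∀ i j, ∀ H : Matrix (Fin 2) (Fin 2) ℂ,
      H.det = 1 → H.mulVec (z i) = z j →
      (∃ c : ℂ, c ≠ 0 ∧ H.mulVec ![ζ i, 1] = c • ![ζ j, 1]) → H = G i j := by
    intro i j H hHdet hHz ⟨c, hc0, hHζ⟩
    have key : H * M i = M j * D c := by
      apply eq_of_mulVec_basis
      · rw [← Matrix.mulVec_mulVec, ← Matrix.mulVec_mulVec, hMe0, hDe0, hMe0, hHz]
      · rw [← Matrix.mulVec_mulVec, ← Matrix.mulVec_mulVec, hMe1, hDe1,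
          Matrix.mulVec_smul, hMe1, hHζ]
    have hcval : c = (M i).det / (M j).det := by
      have := congrArg Matrix.det key
      rw [Matrix.det_mul, Matrix.det_mul, hHdet, one_mul, hDdet] at this
      rw [eq_div_iff (hdne j), this]; ring
    have : H * M i * (M i)⁻¹ = M j * D c * (M i)⁻¹ := by rw [key]
    rw [mul_assoc, hMinv i, mul_one] at this
    rw [this, hcval, hG]
  -- flatness
  have hflat : ∀ i j k, G j k * G i j = G i k := by
    intro i j k
    have hu : IsUnit (M j).det := isUnit_iff_ne_zero.mpr (hdne j)
    rw [hG]
    simp only [Matrix.mul_assoc]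
    rw [Matrix.nonsing_inv_mul_cancel_left _ _ hu, ← Matrix.mul_assoc
      (D ((M j).det / (M k).det)), hDmul]
    have hc : (M j).det / (M k).det * ((M i).det / (M j).det) = (M i).det / (M k).det := by
      rw [div_mul_div_comm, mul_comm (M j).det, mul_div_mul_right _ _ (hdne j)]
    rw [hc]
  have hid : ∀ i, G i i = 1 := by
    intro i
    have hd : (M i).det / (M i).det = 1 := div_self (hdne i)
    have hD1 : D (1 : ℂ) = 1 := by
      ext a b; fin_cases a <;> fin_cases b <;> simp [hD, Matrix.one_apply]
    rw [hG]
    simp only [hd, hD1, mul_one]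
    exact hMinv i
  refine ⟨G, fun i j => ⟨hGdet i j, hGz i j, (M i).det / (M j).det, hcne i j, hGζ i j⟩,
    huniq, hflat, ?_⟩
  -- holonomy
  intro n hn seq
  obtain ⟨m, rfl⟩ : ∃ m, n = m + 1 := ⟨n - 1, (Nat.succ_pred_eq_of_pos hn).symm⟩
  set p : Fin (m+2) → Fin N := fun j => seq ⟨j.val % (m+1), Nat.mod_lt _ (Nat.succ_pos m)⟩ with hp
  have hlist : (fun k : Fin (m+1) => G (seq k) (seq (finRotate (m+1) k)))
      = fun k => G (p k.castSucc) (p k.succ) := by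
    funext k
    have e1 : p k.castSucc = seq k := by
      show seq _ = seq k
      congr 1
      apply Fin.ext
      simp [Nat.mod_eq_of_lt k.isLt]
    have e2 : p k.succ = seq (finRotate (m+1) k) := by
      show seq _ = _
      congr 1
      apply Fin.ext
      simp [finRotate_succ_apply, Fin.add_def]
    rw [e1, e2]
  rw [holonomy, hlist, path_prod G hid hflat]
  have h1 : p 0 = seq 0 := by
    show seq _ = seq 0
    congr 1
  have h2 : p (Fin.last (m+1)) = seq 0 := by
    show seq _ = seq 0
    congr 1
    apply Fin.ext
    simp [Fin.last]
  rw [h1, h2, hid]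
end

section
/- Let N ≥ 1 and let P : (ℂ²)^N → ℂ be a function of the form P(z) = Σ_{k,l,A,B} a_{kA,lB}·z_k^A·z_l^B + Σ_{k,l,A,B} b_{kA,lB}·conj(z_k^A)·z_l^B + Σ_{k,l,A,B} c_{kA,lB}·conj(z_k^A)·conj(z_l^B) for fixed complex coefficients a, b, c (a real-quadratic polynomial in the spinor components and their conjugates). If P is invariant under the simultaneous SU(2) action, i.e. P(g·z_1, …, g·z_N) = P(z_1, …, z_N) for all g ∈ SU(2) and all spinors z_1, …, z_N, then there exist complex coefficients α_{kl}, β_{kl}, γ_{kl} such that P(z) = Σ_{k,l} α_{kl}·[z_k|z_l⟩ + Σ_{k,l} β_{kl}·⟨z_k|z_l⟩ + Σ_{k,l} γ_{kl}·conj([z_k|z_l⟩); that is, the pairings ⟨z_k|z_l⟩, [z_k|z_l⟩ and their conjugates span all SU(2)-invariant quadratic polynomials in the spinors. -/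
open Matrix ComplexConjugate BigOperators

/-- The holomorphic pairing `[z|w⟩ = z⁰w¹ − z¹w⁰` of two spinors. -/
def holo (z w : Fin 2 → ℂ) : ℂ := z 0 * w 1 - z 1 * w 0

namespace Statement19

open Complex (I)

variable {N : ℕ}

lemma collapse (f : Fin N → Fin 2 → ℂ) (k l : Fin N) (A B : Fin 2) (s t : ℂ) :
    ∑ m, ∑ C, f m C * ((if m = k ∧ C = A then s else 0) + (if m = l ∧ C = B then t else 0))
      = f k A * s + f l B * t := by
  simp [mul_add, Finset.sum_add_distrib, ite_and, mul_ite, Finset.sum_ite_eq, Finset.sum_ite_eq']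

lemma quad4 (d : Fin N → Fin 2 → Fin N → Fin 2 → ℂ) (k l : Fin N) (A B : Fin 2) (s t u v : ℂ) :
    (∑ m, ∑ C, ∑ n, ∑ D, d m C n D *
        ((if m = k ∧ C = A then s else 0) + (if m = l ∧ C = B then t else 0)) *
        ((if n = k ∧ D = A then u else 0) + (if n = l ∧ D = B then v else 0)))
      = d k A k A * s * u + d k A l B * s * v + d l B k A * t * u + d l B l B * t * v := by
  have step1 : ∀ m C, (∑ n, ∑ D, d m C n D *
        ((if m = k ∧ C = A then s else 0) + (if m = l ∧ C = B then t else 0)) *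
        ((if n = k ∧ D = A then u else 0) + (if n = l ∧ D = B then v else 0)))
      = (d m C k A * u + d m C l B * v) *
        ((if m = k ∧ C = A then s else 0) + (if m = l ∧ C = B then t else 0)) := by
    intro m C
    have h := collapse (fun n D => d m C n D *
        ((if m = k ∧ C = A then s else 0) + (if m = l ∧ C = B then t else 0))) k l A B u v
    rw [h]; ring
  calc (∑ m, ∑ C, ∑ n, ∑ D, d m C n D *
        ((if m = k ∧ C = A then s else 0) + (if m = l ∧ C = B then t else 0)) *
        ((if n = k ∧ D = A then u else 0) + (if n = l ∧ D = B then v else 0)))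
      = ∑ m, ∑ C, (d m C k A * u + d m C l B * v) *
        ((if m = k ∧ C = A then s else 0) + (if m = l ∧ C = B then t else 0)) := by
        exact Finset.sum_congr rfl fun m _ => Finset.sum_congr rfl fun C _ => step1 m C
    _ = (d k A k A * u + d k A l B * v) * s + (d l B k A * u + d l B l B * v) * t := by
        exact collapse (fun m C => d m C k A * u + d m C l B * v) k l A B s t
    _ = d k A k A * s * u + d k A l B * s * v + d l B k A * t * u + d l B l B * t * v := by ring

set_option linter.unreachableTactic false in
lemma extract (d e f : Fin N → Fin 2 → Fin N → Fin 2 → ℂ)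
    (h : ∀ z : Fin N → Fin 2 → ℂ,
      (∑ k, ∑ A, ∑ l, ∑ B, d k A l B * z k A * z l B) +
      (∑ k, ∑ A, ∑ l, ∑ B, e k A l B * conj (z k A) * z l B) +
      (∑ k, ∑ A, ∑ l, ∑ B, f k A l B * conj (z k A) * conj (z l B)) = 0)
    (k l : Fin N) (A B : Fin 2) :
    d k A l B + d l B k A = 0 ∧ e k A l B = 0 ∧ f k A l B + f l B k A = 0 := by
  have ev : ∀ s t : ℂ,
      (d k A k A * s * s + d k A l B * s * t + d l B k A * t * s + d l B l B * t * t) +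
      (e k A k A * conj s * s + e k A l B * conj s * t + e l B k A * conj t * s
        + e l B l B * conj t * t) +
      (f k A k A * conj s * conj s + f k A l B * conj s * conj t
        + f l B k A * conj t * conj s + f l B l B * conj t * conj t) = 0 := by
    intro s t
    have H := h (fun m C =>
      (if m = k ∧ C = A then s else 0) + (if m = l ∧ C = B then t else 0))
    simp only [map_add, apply_ite (starRingEnd ℂ), map_zero] at H
    rw [quad4 d k l A B s t s t, quad4 e k l A B (conj s) (conj t) s t,
        quad4 f k l A B (conj s) (conj t) (conj s) (conj t)] at H
    exact H
  have E10 := ev 1 0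
  have Ei0 := ev I 0
  have E110 := ev (1 + I) 0
  have E01 := ev 0 1
  have E0i := ev 0 I
  have E011 := ev 0 (1 + I)
  have E11 := ev 1 1
  have Ei1 := ev I 1
  have E1i := ev 1 I
  have Eii := ev I I
  simp only [_root_.map_one, map_zero, map_add, Complex.conj_I]
    at E10 Ei0 E110 E01 E0i E011 E11 Ei1 E1i Eii
  have hI2 : (Complex.I)^2 = -1 := Complex.I_sq
  have hI3 : (Complex.I)^3 = -Complex.I := by rw [pow_succ, hI2]; ring
  have hI4 : (Complex.I)^4 = 1 := by rw [pow_succ, hI3]; simp [Complex.I_mul_I]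
  have hQ1 : e k A k A = 0 := by
    linear_combination (norm := (ring_nf; all_goals simp only [hI2, hI3, hI4]; all_goals ring1))
      (E10 + Ei0) / 2
  have hDR : d k A k A + f k A k A = 0 := by
    linear_combination (norm := (ring_nf; all_goals simp only [hI2, hI3, hI4]; all_goals ring1))
      (E10 - Ei0) / 2
  have hDmR : d k A k A - f k A k A = 0 := by
    linear_combination (norm := (ring_nf; all_goals simp only [hI2, hI3, hI4]; all_goals ring1))
      (-I / 2) * E110 + I * hQ1
  have hD1 : d k A k A = 0 := by linear_combination (hDR + hDmR) / 2
  have hR1 : f k A k A = 0 := by linear_combination (hDR - hDmR) / 2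
  have hQ4 : e l B l B = 0 := by
    linear_combination (norm := (ring_nf; all_goals simp only [hI2, hI3, hI4]; all_goals ring1))
      (E01 + E0i) / 2
  have hDR' : d l B l B + f l B l B = 0 := by
    linear_combination (norm := (ring_nf; all_goals simp only [hI2, hI3, hI4]; all_goals ring1))
      (E01 - E0i) / 2
  have hDmR' : d l B l B - f l B l B = 0 := by
    linear_combination (norm := (ring_nf; all_goals simp only [hI2, hI3, hI4]; all_goals ring1))
      (-I / 2) * E011 + I * hQ4
  have hD3 : d l B l B = 0 := by linear_combination (hDR' + hDmR') / 2
  have hR3 : f l B l B = 0 := by linear_combination (hDR' - hDmR') / 2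
  have hs1 : (d k A l B + d l B k A) + e k A l B + e l B k A + (f k A l B + f l B k A) = 0 := by
    linear_combination (norm := (ring_nf; all_goals simp only [hI2, hI3, hI4]; all_goals ring1))
      E11 - hD1 - hD3 - hQ1 - hQ4 - hR1 - hR3
  have hs2 : (d k A l B + d l B k A) - e k A l B + e l B k A - (f k A l B + f l B k A) = 0 := by
    linear_combination (norm := (ring_nf; all_goals simp only [hI2, hI3, hI4]; all_goals ring1))
      (-I) * Ei1 - I * hD1 + I * hD3 + I * hQ1 + I * hQ4 - I * hR1 + I * hR3
  have hs3 : (d k A l B + d l B k A) + e k A l B - e l B k A - (f k A l B + f l B k A) = 0 := by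
    linear_combination (norm := (ring_nf; all_goals simp only [hI2, hI3, hI4]; all_goals ring1))
      (-I) * E1i + I * hD1 - I * hD3 + I * hQ1 + I * hQ4 + I * hR1 - I * hR3
  have hs4 : -(d k A l B + d l B k A) + e k A l B + e l B k A - (f k A l B + f l B k A) = 0 := by
    linear_combination (norm := (ring_nf; all_goals simp only [hI2, hI3, hI4]; all_goals ring1))
      Eii + hD1 + hD3 - hQ1 - hQ4 + hR1 + hR3
  refine ⟨by linear_combination (hs1 + hs2 + hs3 - hs4) / 4,
    by linear_combination (hs1 - hs2 + hs3 + hs4) / 4,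
    by linear_combination (hs1 - hs2 - hs3 - hs4) / 4⟩

lemma sum4_congr (F G : Fin N → Fin 2 → Fin N → Fin 2 → ℂ)
    (h : ∀ k A l B, F k A l B = G k A l B) :
    (∑ k, ∑ A, ∑ l, ∑ B, F k A l B) = ∑ k, ∑ A, ∑ l, ∑ B, G k A l B :=
  Finset.sum_congr rfl fun k _ => Finset.sum_congr rfl fun A _ =>
    Finset.sum_congr rfl fun l _ => Finset.sum_congr rfl fun B _ => h k A l B

lemma sum4_add (F G : Fin N → Fin 2 → Fin N → Fin 2 → ℂ) :
    (∑ k, ∑ A, ∑ l, ∑ B, (F k A l B + G k A l B))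
      = (∑ k, ∑ A, ∑ l, ∑ B, F k A l B) + (∑ k, ∑ A, ∑ l, ∑ B, G k A l B) := by
  simp [Finset.sum_add_distrib]

lemma swap_sum (F : Fin N → Fin 2 → Fin N → Fin 2 → ℂ) :
    (∑ k, ∑ A, ∑ l, ∑ B, F k A l B) = ∑ k, ∑ l, ∑ A, ∑ B, F k A l B :=
  Finset.sum_congr rfl fun k _ => Finset.sum_comm

lemma sum2_congr (F G : Fin N → Fin N → ℂ) (h : ∀ k l, F k l = G k l) :
    (∑ k, ∑ l, F k l) = ∑ k, ∑ l, G k l :=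
  Finset.sum_congr rfl fun k _ => Finset.sum_congr rfl fun l _ => h k l

lemma sum2_add (F G : Fin N → Fin N → ℂ) :
    (∑ k, ∑ l, F k l) + (∑ k, ∑ l, G k l) = ∑ k, ∑ l, (F k l + G k l) := by
  simp [Finset.sum_add_distrib]

lemma sum2_sym (F G : Fin N → Fin N → ℂ) (h : ∀ k l, F k l + F l k = G k l + G l k) :
    (∑ k, ∑ l, F k l) = ∑ k, ∑ l, G k l := by
  have hFF : (∑ k, ∑ l, F k l) = ∑ k, ∑ l, F l k := Finset.sum_comm
  have hGG : (∑ k, ∑ l, G k l) = ∑ k, ∑ l, G l k := Finset.sum_comm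
  have hc : (∑ k, ∑ l, (F k l + F l k)) = ∑ k, ∑ l, (G k l + G l k) := sum2_congr _ _ h
  rw [← sum2_add, ← sum2_add] at hc
  linear_combination (hc + hFF - hGG) / 2

lemma sum2_sym3 (F1 F2 F3 G1 G2 G3 : Fin N → Fin N → ℂ)
    (h : ∀ k l, (F1 k l + F2 k l + F3 k l) + (F1 l k + F2 l k + F3 l k)
        = (G1 k l + G2 k l + G3 k l) + (G1 l k + G2 l k + G3 l k)) :
    (∑ k, ∑ l, F1 k l) + (∑ k, ∑ l, F2 k l) + (∑ k, ∑ l, F3 k l)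
      = (∑ k, ∑ l, G1 k l) + (∑ k, ∑ l, G2 k l) + (∑ k, ∑ l, G3 k l) := by
  rw [sum2_add, sum2_add, sum2_add, sum2_add]
  exact sum2_sym _ _ (fun k l => by linear_combination h k l)

noncomputable def gd : Matrix (Fin 2) (Fin 2) ℂ := !![I, 0; 0, -I]
def gs : Matrix (Fin 2) (Fin 2) ℂ := !![0, 1; -1, 0]
noncomputable def phi : Fin 2 → ℂ := ![I, -I]
def sg : Fin 2 → ℂ := ![1, -1]
def sw : Fin 2 → Fin 2 := ![1, 0]

lemma gd_mem : gd ∈ Matrix.unitaryGroup (Fin 2) ℂ := by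
  constructor <;>
  · ext i j
    fin_cases i <;> fin_cases j <;>
      simp [gd, Matrix.mul_apply, Fin.sum_univ_two, Matrix.conjTranspose_apply, Complex.ext_iff]

lemma gd_det : gd.det = 1 := by
  simp [gd, Matrix.det_fin_two_of, Complex.ext_iff]

lemma gs_mem : gs ∈ Matrix.unitaryGroup (Fin 2) ℂ := by
  constructor <;>
  · ext i j
    fin_cases i <;> fin_cases j <;>
      simp [gs, Matrix.mul_apply, Fin.sum_univ_two, Matrix.conjTranspose_apply]

lemma gs_det : gs.det = 1 := by
  simp [gs, Matrix.det_fin_two_of]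

lemma gd_act (w : Fin 2 → ℂ) (C : Fin 2) : gd.mulVec w C = phi C * w C := by
  fin_cases C <;> simp [gd, phi, Matrix.mulVec, dotProduct, Fin.sum_univ_two, Matrix.vecHead, Matrix.vecTail]

lemma gs_act (w : Fin 2 → ℂ) (C : Fin 2) : gs.mulVec w C = sg C * w (sw C) := by
  fin_cases C <;> simp [gs, sg, sw, Matrix.mulVec, dotProduct, Fin.sum_univ_two, Matrix.vecHead, Matrix.vecTail]

end Statement19

open Statement19
/-- every real-quadratic polynomial in the spinor components and their
conjugates which is invariant under the simultaneous (diagonal) `SU(2)` action on the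
`N` spinors is a linear combination of the pairings `[z_k|z_l⟩`, `⟨z_k|z_l⟩` and
`conj [z_k|z_l⟩`. -/
theorem invariant_quadratics_spanned_by_pairings (N : ℕ) (hN : 1 ≤ N)
    (a b c : Fin N → Fin 2 → Fin N → Fin 2 → ℂ)
    (P : (Fin N → Fin 2 → ℂ) → ℂ)
    (hP : ∀ z : Fin N → Fin 2 → ℂ, P z =
      (∑ k, ∑ A, ∑ l, ∑ B, a k A l B * z k A * z l B) +
      (∑ k, ∑ A, ∑ l, ∑ B, b k A l B * conj (z k A) * z l B) +
      (∑ k, ∑ A, ∑ l, ∑ B, c k A l B * conj (z k A) * conj (z l B)))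
    (hinv : ∀ g : Matrix (Fin 2) (Fin 2) ℂ, g ∈ Matrix.unitaryGroup (Fin 2) ℂ →
      g.det = 1 → ∀ z : Fin N → Fin 2 → ℂ, P (fun k => g.mulVec (z k)) = P z) :
    ∃ α β γ : Fin N → Fin N → ℂ, ∀ z : Fin N → Fin 2 → ℂ, P z =
      (∑ k, ∑ l, α k l * holo (z k) (z l)) +
      (∑ k, ∑ l, β k l * herm (z k) (z l)) +
      (∑ k, ∑ l, γ k l * conj (holo (z k) (z l))) := by
  -- difference equation for the diagonal element gd
  have key1 : ∀ z : Fin N → Fin 2 → ℂ,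
      (∑ k, ∑ A, ∑ l, ∑ B, (a k A l B * (phi A * phi B - 1)) * z k A * z l B) +
      (∑ k, ∑ A, ∑ l, ∑ B, (b k A l B * (conj (phi A) * phi B - 1)) * conj (z k A) * z l B) +
      (∑ k, ∑ A, ∑ l, ∑ B, (c k A l B * (conj (phi A) * conj (phi B) - 1)) *
          conj (z k A) * conj (z l B)) = 0 := by
    intro z
    have H := hinv gd gd_mem gd_det z
    have H1 := hP z
    have H2 := hP (fun k => gd.mulVec (z k))
    have t1 : (∑ k, ∑ A, ∑ l, ∑ B, a k A l B * gd.mulVec (z k) A * gd.mulVec (z l) B)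
        = (∑ k, ∑ A, ∑ l, ∑ B, ((a k A l B * (phi A * phi B - 1)) * z k A * z l B
            + a k A l B * z k A * z l B)) :=
      sum4_congr _ _ (fun k A l B => by rw [gd_act (z k) A, gd_act (z l) B]; ring)
    have t2 : (∑ k, ∑ A, ∑ l, ∑ B, b k A l B * conj (gd.mulVec (z k) A) * gd.mulVec (z l) B)
        = (∑ k, ∑ A, ∑ l, ∑ B, ((b k A l B * (conj (phi A) * phi B - 1)) * conj (z k A) * z l B
            + b k A l B * conj (z k A) * z l B)) :=
      sum4_congr _ _ (fun k A l B => by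
        rw [gd_act (z k) A, gd_act (z l) B, _root_.map_mul]; ring)
    have t3 : (∑ k, ∑ A, ∑ l, ∑ B,
          c k A l B * conj (gd.mulVec (z k) A) * conj (gd.mulVec (z l) B))
        = (∑ k, ∑ A, ∑ l, ∑ B, ((c k A l B * (conj (phi A) * conj (phi B) - 1)) *
            conj (z k A) * conj (z l B) + c k A l B * conj (z k A) * conj (z l B))) :=
      sum4_congr _ _ (fun k A l B => by
        rw [gd_act (z k) A, gd_act (z l) B, _root_.map_mul, _root_.map_mul]; ring)
    rw [sum4_add] at t1 t2 t3
    linear_combination H1 + H - H2 - t1 - t2 - t3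
  have X1 := extract (fun k A l B => a k A l B * (phi A * phi B - 1))
    (fun k A l B => b k A l B * (conj (phi A) * phi B - 1))
    (fun k A l B => c k A l B * (conj (phi A) * conj (phi B) - 1)) key1
  -- difference equation for the symplectic element gs
  have key2 : ∀ z : Fin N → Fin 2 → ℂ,
      (∑ k, ∑ A, ∑ l, ∑ B, (sg (sw A) * sg (sw B) * a k (sw A) l (sw B) - a k A l B)
          * z k A * z l B) +
      (∑ k, ∑ A, ∑ l, ∑ B, (sg (sw A) * sg (sw B) * b k (sw A) l (sw B) - b k A l B)
          * conj (z k A) * z l B) +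
      (∑ k, ∑ A, ∑ l, ∑ B, (sg (sw A) * sg (sw B) * c k (sw A) l (sw B) - c k A l B)
          * conj (z k A) * conj (z l B)) = 0 := by
    intro z
    have H := hinv gs gs_mem gs_det z
    have H1 := hP z
    have H2 := hP (fun k => gs.mulVec (z k))
    have t1 : (∑ k, ∑ A, ∑ l, ∑ B, a k A l B * gs.mulVec (z k) A * gs.mulVec (z l) B)
        = (∑ k, ∑ A, ∑ l, ∑ B, ((sg (sw A) * sg (sw B) * a k (sw A) l (sw B) - a k A l B)
            * z k A * z l B + a k A l B * z k A * z l B)) := by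
      rw [swap_sum, swap_sum]
      refine sum2_congr _ _ (fun k l => ?_)
      simp only [Fin.sum_univ_two, gs_act]
      simp only [sg, sw, Matrix.cons_val_zero, Matrix.cons_val_one, Matrix.head_cons]
      ring
    have t2 : (∑ k, ∑ A, ∑ l, ∑ B, b k A l B * conj (gs.mulVec (z k) A) * gs.mulVec (z l) B)
        = (∑ k, ∑ A, ∑ l, ∑ B, ((sg (sw A) * sg (sw B) * b k (sw A) l (sw B) - b k A l B)
            * conj (z k A) * z l B + b k A l B * conj (z k A) * z l B)) := by
      rw [swap_sum, swap_sum]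
      refine sum2_congr _ _ (fun k l => ?_)
      simp only [Fin.sum_univ_two, gs_act]
      simp only [sg, sw, Matrix.cons_val_zero, Matrix.cons_val_one, Matrix.head_cons,
        one_mul, neg_one_mul, map_neg]
      ring
    have t3 : (∑ k, ∑ A, ∑ l, ∑ B,
          c k A l B * conj (gs.mulVec (z k) A) * conj (gs.mulVec (z l) B))
        = (∑ k, ∑ A, ∑ l, ∑ B, ((sg (sw A) * sg (sw B) * c k (sw A) l (sw B) - c k A l B)
            * conj (z k A) * conj (z l B) + c k A l B * conj (z k A) * conj (z l B))) := by
      rw [swap_sum, swap_sum]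
      refine sum2_congr _ _ (fun k l => ?_)
      simp only [Fin.sum_univ_two, gs_act]
      simp only [sg, sw, Matrix.cons_val_zero, Matrix.cons_val_one, Matrix.head_cons,
        one_mul, neg_one_mul, map_neg]
      ring
    rw [sum4_add] at t1 t2 t3
    linear_combination H1 + H - H2 - t1 - t2 - t3
  have X2 := extract (fun k A l B => sg (sw A) * sg (sw B) * a k (sw A) l (sw B) - a k A l B)
    (fun k A l B => sg (sw A) * sg (sw B) * b k (sw A) l (sw B) - b k A l B)
    (fun k A l B => sg (sw A) * sg (sw B) * c k (sw A) l (sw B) - c k A l B) key2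
  -- the nine coefficient relations
  have hI := Complex.I_mul_I
  have Ra1 : ∀ k l, a k 0 l 0 + a l 0 k 0 = 0 := by
    intro k l
    have h := (X1 k l 0 0).1
    simp only [phi, Matrix.cons_val_zero, Matrix.cons_val_one, Matrix.head_cons,
      Complex.conj_I, map_neg] at h
    linear_combination (-1/2) * h + ((a k 0 l 0 + a l 0 k 0)/2) * hI
  have Ra2 : ∀ k l, a k 1 l 1 + a l 1 k 1 = 0 := by
    intro k l
    have h := (X1 k l 1 1).1
    simp only [phi, Matrix.cons_val_zero, Matrix.cons_val_one, Matrix.head_cons,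
      Complex.conj_I, map_neg] at h
    linear_combination (-1/2) * h + ((a k 1 l 1 + a l 1 k 1)/2) * hI
  have Rb1 : ∀ k l, b k 0 l 1 = 0 := by
    intro k l
    have h := (X1 k l 0 1).2.1
    simp only [phi, Matrix.cons_val_zero, Matrix.cons_val_one, Matrix.head_cons,
      Complex.conj_I, map_neg] at h
    linear_combination (-1/2) * h + (b k 0 l 1 / 2) * hI
  have Rb2 : ∀ k l, b k 1 l 0 = 0 := by
    intro k l
    have h := (X1 k l 1 0).2.1
    simp only [phi, Matrix.cons_val_zero, Matrix.cons_val_one, Matrix.head_cons,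
      Complex.conj_I, map_neg] at h
    linear_combination (-1/2) * h + (b k 1 l 0 / 2) * hI
  have Rc1 : ∀ k l, c k 0 l 0 + c l 0 k 0 = 0 := by
    intro k l
    have h := (X1 k l 0 0).2.2
    simp only [phi, Matrix.cons_val_zero, Matrix.cons_val_one, Matrix.head_cons,
      Complex.conj_I, map_neg] at h
    linear_combination (-1/2) * h + ((c k 0 l 0 + c l 0 k 0)/2) * hI
  have Rc2 : ∀ k l, c k 1 l 1 + c l 1 k 1 = 0 := by
    intro k l
    have h := (X1 k l 1 1).2.2
    simp only [phi, Matrix.cons_val_zero, Matrix.cons_val_one, Matrix.head_cons,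
      Complex.conj_I, map_neg] at h
    linear_combination (-1/2) * h + ((c k 1 l 1 + c l 1 k 1)/2) * hI
  have Ra3 : ∀ k l, (a k 0 l 1 + a l 1 k 0) + (a k 1 l 0 + a l 0 k 1) = 0 := by
    intro k l
    have h := (X2 k l 0 1).1
    simp only [sg, sw, Matrix.cons_val_zero, Matrix.cons_val_one, Matrix.head_cons] at h
    linear_combination -h
  have Rb3 : ∀ k l, b k 1 l 1 - b k 0 l 0 = 0 := by
    intro k l
    have h := (X2 k l 0 0).2.1
    simp only [sg, sw, Matrix.cons_val_zero, Matrix.cons_val_one, Matrix.head_cons] at h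
    linear_combination h
  have Rc3 : ∀ k l, (c k 0 l 1 + c l 1 k 0) + (c k 1 l 0 + c l 0 k 1) = 0 := by
    intro k l
    have h := (X2 k l 0 1).2.2
    simp only [sg, sw, Matrix.cons_val_zero, Matrix.cons_val_one, Matrix.head_cons] at h
    linear_combination -h
  -- assemble
  refine ⟨fun k l => (a k 0 l 1 + a l 1 k 0) / 2, fun k l => b k 0 l 0,
    fun k l => (c k 0 l 1 + c l 1 k 0) / 2, fun z => ?_⟩
  rw [hP z]
  rw [swap_sum (fun k A l B => a k A l B * z k A * z l B),
    swap_sum (fun k A l B => b k A l B * conj (z k A) * z l B),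
    swap_sum (fun k A l B => c k A l B * conj (z k A) * conj (z l B))]
  refine sum2_sym3 _ _ _ _ _ _ (fun k l => ?_)
  simp only [Fin.sum_univ_two, herm, holo, map_sub, _root_.map_mul]
  linear_combination
    (z k 0 * z l 0) * Ra1 k l + (z k 1 * z l 1) * Ra2 k l
    + ((z k 0 * z l 1 + z k 1 * z l 0)/2) * Ra3 k l
    + (conj (z k 0) * z l 1) * Rb1 k l + (conj (z l 0) * z k 1) * Rb1 l k
    + (conj (z k 1) * z l 0) * Rb2 k l + (conj (z l 1) * z k 0) * Rb2 l k
    + (conj (z k 1) * z l 1) * Rb3 k l + (conj (z l 1) * z k 1) * Rb3 l k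
    + (conj (z k 0) * conj (z l 0)) * Rc1 k l + (conj (z k 1) * conj (z l 1)) * Rc2 k l
    + ((conj (z k 0) * conj (z l 1) + conj (z k 1) * conj (z l 0))/2) * Rc3 k l
end
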